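/- Let Φ be the standard normal CDF and logit(x) = log(x) - log(1-x). For constants a < 0 and b ∈ ℝ, the function h(n) = logit(Φ(a·√n + b)) satisfies lim_{n→∞} dh/dn = -a²/2. -/

import Mathlib

/-!
Write `z = a√n + b`, which tends to `-∞`. By the chain rule
`h'(n) = a/(2√n) · (φ(z)/Φ(z) + φ(z)/(1 - Φ(z)))`. The second summand tends to `0`. For
the first, Mills' ratio gives `φ(z)/Φ(z) ~ -z ~ -a√n` as `z → -∞`, whence the limit `-a²/2`.
The ratio is squeezed by `-z Φ(z) ≤ φ(z) ≤ (1 + z²) Φ(z) / (-z)`, obtained by integrating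
`t φ(t) ≤ z φ(t)` and `(1 - 2/(1 + t²)²) φ(t) ≤ φ(t)` over `(-∞, z]`; the left-hand sides
have the primitives `-φ(t)` and `-t φ(t)/(1 + t²)`.
-/

open Filter Real

/-- Standard normal CDF. -/
noncomputable def stdNormalCDF (z : ℝ) : ℝ :=
  ∫ t in Set.Iic z, Real.exp (-t ^ 2 / 2) / Real.sqrt (2 * Real.pi)

/-- Logit function. -/
noncomputable def logit (x : ℝ) : ℝ := Real.log x - Real.log (1 - x)

open MeasureTheory ProbabilityTheory Asymptotics Set Topology

local notation "φ" => gaussianPDFReal 0 1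

theorem hasDerivAt_integral_Iic {E : Type*} [NormedAddCommGroup E] [NormedSpace ℝ E]
    [CompleteSpace E] {f : ℝ → E} (hf : Integrable f) (hfc : Continuous f) (x : ℝ) :
    HasDerivAt (fun u => ∫ t in Iic u, f t) (f x) x := by
  have h := intervalIntegral.integral_hasDerivAt_right hf.intervalIntegrable
    (hfc.stronglyMeasurableAtFilter _ _) hfc.continuousAt (a := 0) (b := x)
  have heq : (fun u => ∫ t in Iic u, f t) =
      fun u => (∫ t in Iic 0, f t) + ∫ t in (0 : ℝ)..u, f t := by
    funext u
    rw [← intervalIntegral.integral_Iic_sub_Iic hf.integrableOn hf.integrableOn, add_sub_cancel]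
  rw [heq]
  exact h.const_add _

theorem gaussianPDFReal_zero_one_apply (t : ℝ) : φ t = exp (-t ^ 2 / 2) / √(2 * π) := by
  simp [gaussianPDFReal, div_eq_inv_mul]

theorem continuous_gaussianPDFReal_zero_one : Continuous φ := by
  simp only [funext gaussianPDFReal_zero_one_apply]
  fun_prop

theorem hasDerivAt_gaussianPDFReal_zero_one (t : ℝ) : HasDerivAt φ (-(t * φ t)) t := by
  have h : HasDerivAt (fun s : ℝ => -s ^ 2 / 2) (-t) t :=
    ((hasDerivAt_pow 2 t).fun_neg.div_const 2).congr_deriv (by ring)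
  rw [funext gaussianPDFReal_zero_one_apply]
  exact (h.exp.div_const _).congr_deriv (by ring)

theorem integrable_mul_gaussianPDFReal_zero_one : Integrable fun t => t * φ t := by
  have h := (integrable_mul_exp_neg_mul_sq (b := 1 / 2) (by norm_num)).div_const (√(2 * π))
  refine h.congr (ae_of_all _ fun t => ?_)
  simp only [gaussianPDFReal_zero_one_apply]
  rw [mul_div_assoc, neg_div, neg_mul, div_mul_eq_mul_div, one_mul]

theorem tendsto_gaussianPDFReal_zero_one_atBot : Tendsto φ atBot (𝓝 0) :=
  tendsto_zero_of_hasDerivAt_of_integrableOn_Iic (a := 0)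
    (fun t _ => hasDerivAt_gaussianPDFReal_zero_one t)
    integrable_mul_gaussianPDFReal_zero_one.neg.integrableOn
    (integrable_gaussianPDFReal 0 1).integrableOn

theorem stdNormalCDF_eq_integral (z : ℝ) : stdNormalCDF z = ∫ t in Iic z, φ t := by
  simp only [stdNormalCDF, gaussianPDFReal_zero_one_apply]

theorem stdNormalCDF_eq_cdf : stdNormalCDF = cdf (gaussianReal 0 1) := by
  funext z
  rw [cdf_eq_real, measureReal_def, gaussianReal_apply_eq_integral _ one_ne_zero,
    ENNReal.toReal_ofReal (setIntegral_nonneg measurableSet_Iic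
      fun t _ => gaussianPDFReal_nonneg 0 1 t), stdNormalCDF_eq_integral]

theorem hasDerivAt_stdNormalCDF (z : ℝ) : HasDerivAt stdNormalCDF (φ z) z := by
  simp only [funext stdNormalCDF_eq_integral]
  exact hasDerivAt_integral_Iic (integrable_gaussianPDFReal 0 1)
    continuous_gaussianPDFReal_zero_one z

theorem strictMono_stdNormalCDF : StrictMono stdNormalCDF :=
  strictMono_of_deriv_pos fun z => by
    rw [(hasDerivAt_stdNormalCDF z).deriv]
    exact gaussianPDFReal_pos 0 1 z one_ne_zero

theorem stdNormalCDF_pos (z : ℝ) : 0 < stdNormalCDF z :=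
  calc 0 ≤ stdNormalCDF (z - 1) := stdNormalCDF_eq_cdf ▸ cdf_nonneg _ _
    _ < stdNormalCDF z := strictMono_stdNormalCDF (by linarith)

theorem stdNormalCDF_lt_one (z : ℝ) : stdNormalCDF z < 1 :=
  calc stdNormalCDF z < stdNormalCDF (z + 1) := strictMono_stdNormalCDF (by linarith)
    _ ≤ 1 := stdNormalCDF_eq_cdf ▸ cdf_le_one _ _

theorem tendsto_stdNormalCDF_atBot : Tendsto stdNormalCDF atBot (𝓝 0) :=
  stdNormalCDF_eq_cdf ▸ tendsto_cdf_atBot _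

theorem neg_mul_stdNormalCDF_le (z : ℝ) : -z * stdNormalCDF z ≤ φ z := by
  have hprimitive : ∫ t in Iic z, t * φ t = -φ z := by
    have h := integral_Iic_of_hasDerivAt_of_tendsto' (f := fun t => -φ t) (a := z)
      (fun t _ => (hasDerivAt_gaussianPDFReal_zero_one t).neg.congr_deriv (neg_neg _))
      integrable_mul_gaussianPDFReal_zero_one.integrableOn
      (by simpa using tendsto_gaussianPDFReal_zero_one_atBot.neg)
    simpa using h
  have hmono : ∫ t in Iic z, t * φ t ≤ ∫ t in Iic z, z * φ t :=
    setIntegral_mono_on integrable_mul_gaussianPDFReal_zero_one.integrableOn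
      ((integrable_gaussianPDFReal 0 1).const_mul z).integrableOn measurableSet_Iic
      fun t ht => mul_le_mul_of_nonneg_right ht (gaussianPDFReal_nonneg 0 1 t)
  rw [hprimitive, integral_const_mul, ← stdNormalCDF_eq_integral] at hmono
  linarith

theorem neg_mul_le_one_add_sq_mul_stdNormalCDF (z : ℝ) :
    -z * φ z ≤ (1 + z ^ 2) * stdNormalCDF z := by
  set g : ℝ → ℝ := fun t => -t / (1 + t ^ 2) * φ t
  set g' : ℝ → ℝ := fun t => (1 - 2 / (1 + t ^ 2) ^ 2) * φ t
  have hpos (t : ℝ) : 0 < 1 + t ^ 2 := by positivity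
  have hderiv (t : ℝ) : HasDerivAt g (g' t) t := by
    have h := ((hasDerivAt_neg t).fun_div ((hasDerivAt_pow 2 t).const_add 1) (hpos t).ne').mul
      (hasDerivAt_gaussianPDFReal_zero_one t)
    refine h.congr_deriv ?_
    simp only [g']
    field_simp
    ring
  have hg'_le (t : ℝ) : |g' t| ≤ φ t := by
    have h2 : 0 < 2 / (1 + t ^ 2) ^ 2 := by positivity
    have h3 : 2 / (1 + t ^ 2) ^ 2 ≤ 2 := div_le_self (by norm_num) (one_le_pow₀ (by nlinarith))
    rw [abs_mul, abs_of_pos (gaussianPDFReal_pos 0 1 t one_ne_zero)]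
    exact mul_le_of_le_one_left (gaussianPDFReal_nonneg 0 1 t)
      (abs_le.2 ⟨by linarith, by linarith⟩)
  have hg_le (t : ℝ) : |g t| ≤ φ t := by
    have h : |t| / (1 + t ^ 2) ≤ 1 :=
      (div_le_one (hpos t)).2 (by nlinarith [abs_nonneg t, sq_abs t])
    rw [abs_mul, abs_div, abs_neg, abs_of_pos (hpos t),
      abs_of_pos (gaussianPDFReal_pos 0 1 t one_ne_zero)]
    exact mul_le_of_le_one_left (gaussianPDFReal_nonneg 0 1 t) h
  have hg'_int : Integrable g' :=
    (integrable_gaussianPDFReal 0 1).mono' (by fun_prop) (ae_of_all _ hg'_le)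
  have hprimitive : ∫ t in Iic z, g' t = g z := by
    simpa using integral_Iic_of_hasDerivAt_of_tendsto' (fun t _ => hderiv t) hg'_int.integrableOn
      (squeeze_zero_norm hg_le tendsto_gaussianPDFReal_zero_one_atBot)
  have hmono : ∫ t in Iic z, g' t ≤ stdNormalCDF z := by
    rw [stdNormalCDF_eq_integral]
    exact setIntegral_mono_on hg'_int.integrableOn (integrable_gaussianPDFReal 0 1).integrableOn
      measurableSet_Iic fun t _ => (le_abs_self _).trans (hg'_le t)
  rw [hprimitive, show g z = -z / (1 + z ^ 2) * φ z from rfl, div_mul_eq_mul_div,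
    div_le_iff₀ (hpos z)] at hmono
  linarith

theorem isEquivalent_gaussianPDFReal_div_stdNormalCDF_atBot :
    (fun z => φ z / stdNormalCDF z) ~[atBot] fun z => -z := by
  have hupper : Tendsto (fun z : ℝ => 1 + z⁻¹ * z⁻¹) atBot (𝓝 1) := by
    simpa using ((tendsto_inv_atBot_zero (𝕜 := ℝ)).mul tendsto_inv_atBot_zero).const_add 1
  refine isEquivalent_of_tendsto_one
    (tendsto_of_tendsto_of_tendsto_of_le_of_le' tendsto_const_nhds hupper ?_ ?_)
  · filter_upwards [eventually_lt_atBot 0] with z hz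
    rw [Pi.div_apply, le_div_iff₀ (neg_pos.2 hz), one_mul, le_div_iff₀ (stdNormalCDF_pos z)]
    exact neg_mul_stdNormalCDF_le z
  · filter_upwards [eventually_lt_atBot 0] with z hz
    rw [Pi.div_apply, div_div, div_le_iff₀ (mul_pos (stdNormalCDF_pos z) (neg_pos.2 hz))]
    refine le_of_mul_le_mul_left ?_ (pow_pos (neg_pos.2 hz) 2)
    rw [show (-z) ^ 2 * ((1 + z⁻¹ * z⁻¹) * (stdNormalCDF z * -z))
        = -z * ((1 + z ^ 2) * stdNormalCDF z) by field_simp [hz.ne]; ring]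
    nlinarith [neg_mul_le_one_add_sq_mul_stdNormalCDF z]

theorem hasDerivAt_logit {x : ℝ} (h0 : 0 < x) (h1 : x < 1) :
    HasDerivAt logit (x⁻¹ + (1 - x)⁻¹) x :=
  ((hasDerivAt_log h0.ne').sub
    (((hasDerivAt_id' x).const_sub 1).log (sub_pos.2 h1).ne')).congr_deriv (by field_simp; ring)

theorem hasDerivAt_logit_stdNormalCDF (z : ℝ) :
    HasDerivAt (fun z => logit (stdNormalCDF z))
      (φ z / stdNormalCDF z + φ z / (1 - stdNormalCDF z)) z :=
  ((hasDerivAt_logit (stdNormalCDF_pos z) (stdNormalCDF_lt_one z)).comp z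
    (hasDerivAt_stdNormalCDF z)).congr_deriv (by ring)

theorem deriv_logit_stdNormalCDF_mul_sqrt_add (a b : ℝ) {n : ℝ} (hn : 0 < n) :
    deriv (fun n => logit (stdNormalCDF (a * √n + b))) n =
      a / (2 * √n) * (φ (a * √n + b) / stdNormalCDF (a * √n + b)) +
        a / (2 * √n) * (φ (a * √n + b) / (1 - stdNormalCDF (a * √n + b))) := by
  have hinner : HasDerivAt (fun n => a * √n + b) (a / (2 * √n)) n :=
    (((hasDerivAt_sqrt hn.ne').const_mul a).add_const b).congr_deriv (by ring)
  have hd : HasDerivAt (fun n => logit (stdNormalCDF (a * √n + b))) _ n :=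
    (hasDerivAt_logit_stdNormalCDF _).comp n hinner
  rw [hd.deriv]
  ring

theorem stmt_1 (a b : ℝ) (ha : a < 0) :
    Tendsto (fun n : ℝ => deriv (fun n : ℝ => logit (stdNormalCDF (a * Real.sqrt n + b))) n)
      atTop (nhds (-(a ^ 2) / 2)) := by
  have hz : Tendsto (fun n => a * √n + b) atTop atBot :=
    tendsto_atBot_add_const_right _ b ((tendsto_const_mul_atBot_of_neg ha).2 tendsto_sqrt_atTop)
  have hc : Tendsto (fun n => a / (2 * √n)) atTop (𝓝 0) :=
    tendsto_const_nhds.div_atTop (tendsto_sqrt_atTop.const_mul_atTop two_pos)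
  have hlin : Tendsto (fun n => a / (2 * √n) * -(a * √n + b)) atTop (𝓝 (-(a ^ 2) / 2)) := by
    have h := (hc.mul_const (-b)).const_add (-(a ^ 2) / 2)
    rw [zero_mul, add_zero] at h
    refine h.congr' ?_
    filter_upwards [eventually_gt_atTop 0] with n hn
    field_simp [(sqrt_pos.2 hn).ne']
    ring
  have hmain : Tendsto (fun n => a / (2 * √n) * (φ (a * √n + b) / stdNormalCDF (a * √n + b)))
      atTop (𝓝 (-(a ^ 2) / 2)) :=
    (IsEquivalent.refl.mul
      (isEquivalent_gaussianPDFReal_div_stdNormalCDF_atBot.comp_tendsto hz)).symm.tendsto_nhds hlin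
  have htail : Tendsto
      (fun n => a / (2 * √n) * (φ (a * √n + b) / (1 - stdNormalCDF (a * √n + b)))) atTop (𝓝 0) := by
    simpa using hc.mul ((tendsto_gaussianPDFReal_zero_one_atBot.comp hz).div
      ((tendsto_stdNormalCDF_atBot.comp hz).const_sub 1) (by norm_num))
  have hsum := hmain.add htail
  rw [add_zero] at hsum
  refine hsum.congr' ?_
  filter_upwards [eventually_gt_atTop 0] with n hn
  rw [deriv_logit_stdNormalCDF_mul_sqrt_add a b hn]
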